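/- Let p and q be coprime positive integers and let S = {n : 0 < n < pq and n = qx + py for some integers x, y with 0 < x < p and 0 < y < q}. Then (2/(pq)) · Σ_{n ∈ S} (pq - 2n) = -(p-1)(p+1)(q-1)(q+1)/(3pq), as an identity of rational numbers. -/

import Mathlib

/-!
Since `q x + p y` determines `x` mod `p` and `y` mod `q`, the set `S` is in bijection with the
lattice points `0 < x < p`, `0 < y < q` below the line `q x + p y = p q`. Summing column by
column and writing `q x = p f + r` with `0 ≤ r < p`, column `x` is `0 < y < q - f` and
contributes `(q²x² - r²)/p - (q - 1)(q x + r)`. As `x` runs over `0 < x < p` so does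
`r = q x mod p`, so the whole sum is `(q² - 1) ∑ (x²/p - x)`, a combination of power sums.
-/

open Finset

namespace TorusKnot

lemma sum_Ioo_zero_eq_sum_range {M : Type*} [AddCommMonoid M] (m : ℕ) {g : ℕ → M}
    (hg : g 0 = 0) :
    ∑ i ∈ Ioo 0 m, g i = ∑ i ∈ range m, g i := by
  rw [← sum_erase (range m) hg]
  congr 1
  ext i
  simp only [mem_Ioo, mem_erase, mem_range]
  omega

lemma sum_Ioo_zero_cast (m : ℕ) : ∑ i ∈ Ioo 0 m, (i : ℚ) = m * (m - 1) / 2 := by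
  rw [sum_Ioo_zero_eq_sum_range m Nat.cast_zero]
  induction m with
  | zero => simp
  | succ k ih => rw [sum_range_succ, ih]; push_cast; ring

lemma sum_Ioo_zero_cast_sq (m : ℕ) :
    ∑ i ∈ Ioo 0 m, (i : ℚ) ^ 2 = m * (m - 1) * (2 * m - 1) / 6 := by
  rw [sum_Ioo_zero_eq_sum_range m (by simp)]
  induction m with
  | zero => simp
  | succ k ih => rw [sum_range_succ, ih]; push_cast; ring

variable {p q : ℕ}

lemma mul_mod_pos_of_coprime (hpq : Nat.Coprime p q) {x : ℕ} (hx₀ : 0 < x) (hx : x < p) :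
    0 < q * x % p := by
  refine Nat.pos_of_ne_zero fun h => ?_
  have : p ∣ x := hpq.dvd_of_dvd_mul_left (Nat.dvd_of_mod_eq_zero h)
  exact absurd (Nat.le_of_dvd hx₀ this) (by omega)

lemma sum_comp_mul_mod {M : Type*} [AddCommMonoid M] (hpq : Nat.Coprime p q) (g : ℕ → M) :
    ∑ x ∈ Ioo 0 p, g (q * x % p) = ∑ x ∈ Ioo 0 p, g x := by
  have hmaps : ∀ x ∈ Ioo 0 p, q * x % p ∈ Ioo 0 p := fun x hx => by
    rw [mem_Ioo] at hx ⊢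
    exact ⟨mul_mod_pos_of_coprime hpq hx.1 hx.2, Nat.mod_lt _ (by omega)⟩
  have hinj : Set.InjOn (fun x => q * x % p) (Ioo 0 p : Set ℕ) := fun x₁ h₁ x₂ h₂ h =>
    (Nat.ModEq.cancel_left_of_coprime hpq h).eq_of_lt_of_lt (mem_Ioo.1 h₁).2 (mem_Ioo.1 h₂).2
  exact sum_nbij _ hmaps hinj (surjOn_of_injOn_of_card_le _ hmaps hinj le_rfl) fun _ _ => rfl

lemma injOn_mul_add_mul (hpq : Nat.Coprime p q) :
    Set.InjOn (fun z : ℕ × ℕ => q * z.1 + p * z.2) {z | z.1 < p} := by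
  rintro ⟨x₁, y₁⟩ (hx₁ : x₁ < p) ⟨x₂, y₂⟩ (hx₂ : x₂ < p)
    (h : q * x₁ + p * y₁ = q * x₂ + p * y₂)
  have hmod : q * x₁ ≡ q * x₂ [MOD p] := by
    simpa [Nat.ModEq, Nat.add_mul_mod_self_left] using congrArg (· % p) h
  obtain rfl := (Nat.ModEq.cancel_left_of_coprime hpq hmod).eq_of_lt_of_lt hx₁ hx₂
  rw [Nat.eq_of_mul_eq_mul_left (show 0 < p by omega) (by omega : p * y₁ = p * y₂)]

lemma filter_Ioo_add_mul_lt {x : ℕ} (hx : x < p) :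
    (Ioo 0 q).filter (fun y => q * x + p * y < p * q) = Ioo 0 (q - q * x / p) := by
  have key : ∀ y < q, q * x + p * y < p * q ↔ q * x / p < q - y := fun y hy => by
    have : p * y ≤ p * q := Nat.mul_le_mul_left p hy.le
    rw [Nat.div_lt_iff_lt_mul (by omega), Nat.sub_mul, mul_comm q p, mul_comm y p]
    omega
  generalize q * x / p = f at key
  ext y
  simp only [mem_filter, mem_Ioo]
  constructor
  · rintro ⟨⟨hy₀, hy⟩, h⟩
    exact ⟨hy₀, by have := (key y hy).1 h; omega⟩
  · rintro ⟨hy₀, h⟩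
    exact ⟨⟨hy₀, by omega⟩, (key y (by omega)).2 (by omega)⟩

lemma sum_filter_add_mul_lt (hq : 0 < q) {x : ℕ} (hx : x < p) :
    ∑ y ∈ (Ioo 0 q).filter (fun y => q * x + p * y < p * q),
        ((p : ℚ) * q - 2 * ((q * x + p * y : ℕ) : ℚ)) =
      ((q : ℚ) ^ 2 * x ^ 2 / p - (q - 1) * q * x) -
        (((q * x % p : ℕ) : ℚ) ^ 2 / p + (q - 1) * (q * x % p : ℕ)) := by
  have hp : (p : ℚ) ≠ 0 := by norm_cast; omega
  have hf : q * x / p < q :=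
    (Nat.div_lt_iff_lt_mul (by omega)).2 (Nat.mul_lt_mul_of_pos_left hx hq)
  have hdm : (p : ℚ) * (q * x / p : ℕ) + (q * x % p : ℕ) = q * x := by
    exact_mod_cast Nat.div_add_mod (q * x) p
  rw [filter_Ioo_add_mul_lt hx]
  simp only [Nat.cast_add, Nat.cast_mul, mul_add, ← sub_sub, sum_sub_distrib, sum_const,
    Nat.card_Ioo, nsmul_eq_mul, ← mul_sum, sum_Ioo_zero_cast, Nat.sub_zero]
  rw [Nat.cast_sub (by omega), Nat.cast_sub hf.le, Nat.cast_one, eq_sub_of_add_eq' hdm]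
  field_simp
  ring

open Classical in
lemma filter_exists_eq_image (hq : 0 < q) :
    (Ioo 0 (p * q)).filter
        (fun n => ∃ x y : ℕ, 0 < x ∧ x < p ∧ 0 < y ∧ y < q ∧ n = q * x + p * y) =
      ((Ioo 0 p ×ˢ Ioo 0 q).filter (fun z => q * z.1 + p * z.2 < p * q)).image
        (fun z => q * z.1 + p * z.2) := by
  ext n
  simp only [mem_filter, mem_image, mem_product, mem_Ioo, Prod.exists]
  constructor
  · rintro ⟨⟨-, hn⟩, x, y, hx₀, hx, hy₀, hy, rfl⟩
    exact ⟨x, y, ⟨⟨⟨hx₀, hx⟩, hy₀, hy⟩, hn⟩, rfl⟩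
  · rintro ⟨x, y, ⟨⟨⟨hx₀, hx⟩, hy₀, hy⟩, hn⟩, rfl⟩
    exact ⟨⟨Nat.add_pos_left (Nat.mul_pos hq hx₀) _, hn⟩, x, y, hx₀, hx, hy₀, hy, rfl⟩

end TorusKnot

open TorusKnot

open Classical in
theorem torus_L2_signature (p q : ℕ) (hp : 0 < p) (hq : 0 < q) (hpq : Nat.Coprime p q) :
    (2 / ((p : ℚ) * q)) *
        (∑ n ∈ (Finset.Ioo 0 (p * q)).filter
            (fun n => ∃ x y : ℕ, 0 < x ∧ x < p ∧ 0 < y ∧ y < q ∧ n = q * x + p * y),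
          ((p : ℚ) * q - 2 * n)) =
      -(((p : ℚ) - 1) * ((p : ℚ) + 1) * ((q : ℚ) - 1) * ((q : ℚ) + 1)) / (3 * p * q) := by
  have hinj : Set.InjOn (fun z : ℕ × ℕ => q * z.1 + p * z.2)
      ((Ioo 0 p ×ˢ Ioo 0 q).filter (fun z => q * z.1 + p * z.2 < p * q) : Set (ℕ × ℕ)) :=
    (injOn_mul_add_mul hpq).mono fun z hz => by
      simp only [coe_filter, mem_product, mem_Ioo] at hz
      exact hz.1.1.2
  have hremainder := sum_comp_mul_mod hpq fun r : ℕ => (r : ℚ) ^ 2 / p + (q - 1) * r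
  have hsum : ∑ n ∈ (Ioo 0 (p * q)).filter
        (fun n => ∃ x y : ℕ, 0 < x ∧ x < p ∧ 0 < y ∧ y < q ∧ n = q * x + p * y),
      ((p : ℚ) * q - 2 * n) = ((q : ℚ) ^ 2 - 1) * ∑ x ∈ Ioo 0 p, ((x : ℚ) ^ 2 / p - x) := by
    rw [filter_exists_eq_image hq, sum_image hinj, sum_filter, sum_product]
    rw [sum_congr rfl fun x hx => by rw [← sum_filter, sum_filter_add_mul_lt hq (mem_Ioo.1 hx).2],
      sum_sub_distrib, hremainder, ← sum_sub_distrib, mul_sum]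
    exact sum_congr rfl fun x _ => by ring
  have hp' : (p : ℚ) ≠ 0 := Nat.cast_ne_zero.2 hp.ne'
  have hq' : (q : ℚ) ≠ 0 := Nat.cast_ne_zero.2 hq.ne'
  rw [hsum, sum_sub_distrib, ← sum_div, sum_Ioo_zero_cast, sum_Ioo_zero_cast_sq]
  field_simp
  ring
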